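/- Let R be a commutative ring and a, b, c ∈ R such that the discriminant Δ of the Weierstrass curve with coefficients (a₁, a₂, a₃, a₄, a₆) = (0, a, 0, b, c) is a unit in R. Then R[x, y]/(y² − x³ − a·x² − b·x − c) is a smooth R-algebra (formally smooth and of finite presentation). -/

import Mathlib

/-!
Write `F = y² − f(x)` with `f = x³ + ax² + bx + c`. For a quotient `A = P ⧸ (F)` of a polynomial
ring, formal smoothness amounts to a retraction of the conormal map `(F)/(F²) → A ⊗ Ω[P⁄R]`, and
such a retraction exists as soon as `F, ∂F/∂x, ∂F/∂y` generate the unit ideal: a combination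
`∑ Gᵢ ∂F/∂xᵢ ≡ 1 mod F` is a linear form on `Ω[P⁄R]` sending `dF` to `1` in `A`. For the
Weierstrass relation, `Δ = 16 disc f` is a combination of `f` and `f'`, hence of `F` and its
partial derivatives, so the unit `Δ` already lies in that ideal.
-/

open MvPolynomial

/-- The Weierstrass relation `y² − x³ − a·x² − b·x − c` in the polynomial ring in two
variables `x = X 0`, `y = X 1`. -/
noncomputable def wRel (A : Type*) [CommRing A] (a b c : A) : MvPolynomial (Fin 2) A :=
  X 1 ^ 2 - X 0 ^ 3 - C a * X 0 ^ 2 - C b * X 0 - C c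

namespace Algebra.FormallySmooth

theorem quotient_span_singleton {R P : Type*} [CommRing R] [CommRing P] [Algebra R P]
    [FormallySmooth R P] {F : P} (μ : Ω[P⁄R] →ₗ[P] P)
    (hμ : μ (KaehlerDifferential.D R P F) - 1 ∈ Ideal.span {F}) :
    FormallySmooth R (P ⧸ Ideal.span {F}) := by
  set K := RingHom.ker (algebraMap P (P ⧸ Ideal.span {F}))
  have hK : K = Ideal.span {F} := Ideal.mk_ker
  have hF : F ∈ K := hK ▸ Ideal.mem_span_singleton_self F
  set ξ : K.Cotangent := K.toCotangent ⟨F, hF⟩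
  let ν : (P ⧸ Ideal.span {F}) →ₗ[P] K.Cotangent :=
    (Ideal.span {F}).liftQ (LinearMap.toSpanSingleton P K.Cotangent ξ) fun p hp ↦
      Ideal.Cotangent.smul_eq_zero_of_mem (hK ▸ hp) ξ
  let l := ν ∘ₗ
    ((Algebra.linearMap P _ ∘ₗ μ).liftBaseChange (P ⧸ Ideal.span {F})).restrictScalars P
  have hξ : l (KaehlerDifferential.kerCotangentToTensor R P _ ξ) = ξ := by
    have : (μ (KaehlerDifferential.D R P F) - 1) • ξ = 0 :=
      Ideal.Cotangent.smul_eq_zero_of_mem (hK ▸ hμ) ξ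
    rw [sub_smul, one_smul, sub_eq_zero] at this
    rw [KaehlerDifferential.kerCotangentToTensor_toCotangent, LinearMap.comp_apply,
      LinearMap.restrictScalars_apply, LinearMap.liftBaseChange_tmul, one_smul]
    exact this
  rw [iff_split_injection (P := P) Ideal.Quotient.mk_surjective]
  refine ⟨l, LinearMap.ext fun z ↦ ?_⟩
  obtain ⟨⟨x, hx⟩, rfl⟩ := K.toCotangent_surjective z
  obtain ⟨p, rfl⟩ := Ideal.mem_span_singleton'.mp (hK ▸ hx)
  have : (⟨p * F, hx⟩ : K) = p • ⟨F, hF⟩ := rfl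
  rw [this, map_smul, LinearMap.comp_apply, map_smul, map_smul, hξ]
  rfl

end Algebra.FormallySmooth

theorem MvPolynomial.formallySmooth_quotient_span_singleton {R σ : Type*} [CommRing R]
    [Fintype σ] {F : MvPolynomial σ R}
    (hF : Ideal.span (insert F (Set.range fun i ↦ pderiv i F)) = ⊤) :
    Algebra.FormallySmooth R (MvPolynomial σ R ⧸ Ideal.span {F}) := by
  obtain ⟨H, z, hz, h1⟩ := Ideal.mem_span_insert.mp (hF ▸ Submodule.mem_top (x := 1))
  obtain ⟨G, rfl⟩ := Submodule.mem_span_range_iff_exists_fun _ |>.mp hz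
  refine Algebra.FormallySmooth.quotient_span_singleton
    ((KaehlerDifferential.mvPolynomialBasis R σ).constr (MvPolynomial σ R) G) ?_
  rw [Module.Basis.constr_apply_fintype, h1]
  simp only [Module.Basis.equivFun_apply, KaehlerDifferential.mvPolynomialBasis_repr_apply,
    smul_eq_mul, mul_comm (pderiv _ F), sub_add_cancel_right, neg_mem_iff]
  exact Ideal.mul_mem_left _ H (Ideal.mem_span_singleton_self F)

theorem WeierstrassCurve.Δ_of_a₁_eq_zero_of_a₃_eq_zero {R : Type*} [CommRing R]
    (W : WeierstrassCurve R) (h₁ : W.a₁ = 0) (h₃ : W.a₃ = 0) :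
    W.Δ = -64 * W.a₂ ^ 3 * W.a₆ + 16 * W.a₂ ^ 2 * W.a₄ ^ 2 - 64 * W.a₄ ^ 3 - 432 * W.a₆ ^ 2
      + 288 * W.a₂ * W.a₄ * W.a₆ := by
  simp only [Δ, b₂, b₄, b₆, b₈, h₁, h₃]
  ring

/-- With `F = y² − f(x)`, so that `∂F/∂x = −f'` and `∂F/∂y = 2y`, the combination below equals
`16 (A f' + B f)`, and `A f' + B f = disc f` is the Bézout identity for the discriminant of a
monic cubic. -/
theorem C_Δ_mem_span_wRel_pderiv (R : Type*) [CommRing R] (a b c : R) :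
    C (WeierstrassCurve.mk 0 a 0 b c : WeierstrassCurve R).Δ ∈
      Ideal.span (insert (wRel R a b c) (Set.range fun i ↦ pderiv i (wRel R a b c))) := by
  set A : MvPolynomial (Fin 2) R := C (2 * a ^ 2 - 6 * b) * X 0 ^ 2 + C (2 * a ^ 3 - 7 * a * b + 9 * c) * X 0
    + C (a ^ 2 * b - 4 * b ^ 2 + 3 * a * c)
  set B : MvPolynomial (Fin 2) R := C (18 * b - 6 * a ^ 2) * X 0 + C (-4 * a ^ 3 + 15 * a * b - 27 * c)
  refine Ideal.mem_span_insert.mpr ⟨-C 16 * B, _,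
    Submodule.mem_span_range_iff_exists_fun _ |>.mpr ⟨![-C 16 * A, C 8 * B * X 1], rfl⟩, ?_⟩
  have hx : pderiv 0 (wRel R a b c) = -(3 * X 0 ^ 2 + 2 * C a * X 0 + C b) := by
    simp [wRel]
    ring
  have hy : pderiv 1 (wRel R a b c) = 2 * X 1 := by simp [wRel]
  rw [WeierstrassCurve.Δ_of_a₁_eq_zero_of_a₃_eq_zero (.mk 0 a 0 b c) rfl rfl]
  simp only [Fin.sum_univ_two, Matrix.cons_val_zero, Matrix.cons_val_one, smul_eq_mul, hx, hy]
  simp only [wRel, A, B, map_mul, map_add, map_sub, map_pow, map_neg, map_ofNat]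
  ring

/-- Let `R` be a commutative ring and `a, b, c ∈ R` such that the discriminant `Δ` of the
Weierstrass curve with coefficients `(a₁, a₂, a₃, a₄, a₆) = (0, a, 0, b, c)` is a unit in `R`.
Then `R[x,y]/(y² − x³ − ax² − bx − c)` is a smooth `R`-algebra (formally smooth and of finite
presentation). -/
theorem stmt15 (R : Type*) [CommRing R] (a b c : R)
    (hΔ : IsUnit (WeierstrassCurve.mk 0 a 0 b c : WeierstrassCurve R).Δ) :
    Algebra.FormallySmooth R (MvPolynomial (Fin 2) R ⧸ Ideal.span {wRel R a b c}) ∧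
    Algebra.FinitePresentation R (MvPolynomial (Fin 2) R ⧸ Ideal.span {wRel R a b c}) :=
  ⟨formallySmooth_quotient_span_singleton <|
      Ideal.eq_top_of_isUnit_mem _ (C_Δ_mem_span_wRel_pderiv R a b c) (hΔ.map C),
    .quotient ⟨{wRel R a b c}, by simp⟩⟩
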